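/- arXiv:2604.18352 — 4 statements merged into one kernel-verified Lean document; each statement's English description precedes it below -/
import Mathlib

section
/- The Gaussian tradeoff function G_μ(α) = Φ(Φ^{-1}(1 − α) − μ), defined for α ∈ [0,1] and μ ≥ 0, equals the optimal tradeoff between type-I and type-II errors for testing N(0,1) against N(μ,1): for any test (measurable function) φ: ℝ → [0,1] with type-I error E_{N(0,1)}[φ] ≤ α, the type-II error satisfies 1 − E_{N(μ,1)}[φ] ≥ G_μ(α), and this bound is achieved by a threshold test. -/
open MeasureTheory ProbabilityTheory Real Set

/-- Standard normal CDF. -/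
noncomputable def Phi (x : ℝ) : ℝ := ((gaussianReal 0 1) (Set.Iic x)).toReal

/-- Inverse of the standard normal CDF (on (0,1)). -/
noncomputable def PhiInv (p : ℝ) : ℝ := sInf {x : ℝ | p ≤ Phi x}

/-- Gaussian tradeoff function `G_μ`, extended by `G_μ(0)=1`, `G_μ(1)=0`. -/
noncomputable def Gmu (μ α : ℝ) : ℝ :=
  if α ≤ 0 then 1 else if 1 ≤ α then 0 else Phi (PhiInv (1 - α) - μ)

/-- Optimal hypothesis-testing tradeoff function: minimal type-II error over
randomized tests with type-I error at most `α`. -/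
noncomputable def tradeoff {Ω : Type*} [MeasurableSpace Ω] (P Q : Measure Ω) (α : ℝ) : ℝ :=
  sInf { b : ℝ | ∃ φ : Ω → ℝ, Measurable φ ∧ (∀ ω, φ ω ∈ Set.Icc (0:ℝ) 1) ∧
    (∫ ω, φ ω ∂P) ≤ α ∧ b = 1 - ∫ ω, φ ω ∂Q }

/-- Rényi divergence of order `a > 1`. -/
noncomputable def renyiDiv {Ω : Type*} [MeasurableSpace Ω] (a : ℝ) (P Q : Measure Ω) : ℝ :=
  (a - 1)⁻¹ * Real.log (∫ ω, ((Measure.rnDeriv P Q ω).toReal) ^ a ∂Q)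

/-- `(ε,δ)`-differential privacy. -/
def IsDP {X Ω : Type*} [MeasurableSpace Ω] (M : X → Measure Ω) (Neighbor : X → X → Prop)
    (ε δ : ℝ) : Prop :=
  ∀ x x', Neighbor x x' → ∀ S : Set Ω, MeasurableSet S →
    ((M x) S).toReal ≤ Real.exp ε * ((M x') S).toReal + δ

/-- `ρ`-zero-concentrated differential privacy. -/
def IsZCDP {X Ω : Type*} [MeasurableSpace Ω] (M : X → Measure Ω) (Neighbor : X → X → Prop)
    (ρ : ℝ) : Prop :=
  ∀ x x', Neighbor x x' → ∀ a : ℝ, 1 < a → renyiDiv a (M x) (M x') ≤ ρ * a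

/-- `μ`-Gaussian differential privacy. -/
def IsGDP {X Ω : Type*} [MeasurableSpace Ω] (M : X → Measure Ω) (Neighbor : X → X → Prop)
    (μ : ℝ) : Prop :=
  ∀ x x', Neighbor x x' → ∀ α ∈ Set.Icc (0:ℝ) 1, Gmu μ α ≤ tradeoff (M x) (M x') α

lemma Phi_eq (x : ℝ) : Phi x = ∫ t in Iic x, gaussianPDFReal 0 1 t := by
  rw [Phi, gaussianReal_apply_eq_integral 0 one_ne_zero,
    ENNReal.toReal_ofReal (integral_nonneg fun t => gaussianPDFReal_nonneg 0 1 t)]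

lemma Phi_mono : Monotone Phi := fun x y hxy =>
  ENNReal.toReal_mono (measure_ne_top _ _) (measure_mono (Iic_subset_Iic.2 hxy))

lemma Phi_strictMono : StrictMono Phi := by
  intro x y h
  rw [Phi_eq, Phi_eq, ← Iic_union_Ioc_eq_Iic h.le,
    setIntegral_union (Set.Iic_disjoint_Ioc le_rfl) measurableSet_Ioc
      (integrable_gaussianPDFReal 0 1).integrableOn
      (integrable_gaussianPDFReal 0 1).integrableOn]
  have hpos : 0 < ∫ t in Ioc x y, gaussianPDFReal 0 1 t := by
    rw [setIntegral_pos_iff_support_of_nonneg_ae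
      (ae_of_all _ fun t => gaussianPDFReal_nonneg 0 1 t)
      (integrable_gaussianPDFReal 0 1).integrableOn]
    have : Function.support (gaussianPDFReal 0 1) = univ := by
      ext t; simp [(gaussianPDFReal_pos 0 1 t one_ne_zero).ne']
    rw [this, univ_inter, Real.volume_Ioc]
    simp [h]
  linarith

lemma gaussianPDFReal_le (t : ℝ) : gaussianPDFReal 0 1 t ≤ (√(2 * π))⁻¹ := by
  rw [gaussianPDFReal]
  simp only [NNReal.coe_one, mul_one, sub_zero]
  have h1 : rexp (-t ^ 2 / 2) ≤ 1 := by
    rw [← Real.exp_zero]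
    apply Real.exp_le_exp.2
    nlinarith [sq_nonneg t]
  have h2 : (0:ℝ) < (√(2 * π))⁻¹ := by positivity
  nlinarith

lemma Phi_sub_le {x y : ℝ} (h : x ≤ y) : Phi y - Phi x ≤ (√(2 * π))⁻¹ * (y - x) := by
  rw [Phi_eq, Phi_eq, ← Iic_union_Ioc_eq_Iic h,
    setIntegral_union (Set.Iic_disjoint_Ioc le_rfl) measurableSet_Ioc
      (integrable_gaussianPDFReal 0 1).integrableOn
      (integrable_gaussianPDFReal 0 1).integrableOn]
  have hb : ∫ t in Ioc x y, gaussianPDFReal 0 1 t ≤ ∫ _t in Ioc x y, (√(2 * π))⁻¹ := by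
    refine setIntegral_mono_on (integrable_gaussianPDFReal 0 1).integrableOn
      (integrableOn_const ?_) measurableSet_Ioc
      (fun t _ => gaussianPDFReal_le t)
    rw [Real.volume_Ioc]
    exact ENNReal.ofReal_lt_top.ne
  rw [setIntegral_const, measureReal_def, Real.volume_Ioc, ENNReal.toReal_ofReal (by linarith),
    smul_eq_mul] at hb
  linarith

lemma Phi_continuous : Continuous Phi := by
  have : LipschitzWith ⟨(√(2 * π))⁻¹, by positivity⟩ Phi := by
    apply LipschitzWith.of_dist_le_mul
    intro x y
    rcases le_total x y with h | h
    · rw [Real.dist_eq, Real.dist_eq, abs_sub_comm, abs_of_nonneg (by linarith [Phi_mono h]),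
        abs_of_nonpos (by linarith)]
      have h' := Phi_sub_le h
      change _ ≤ (√(2 * π))⁻¹ * _
      linarith
    · rw [Real.dist_eq, Real.dist_eq, abs_of_nonneg (by linarith [Phi_mono h]),
        abs_of_nonneg (by linarith)]
      exact Phi_sub_le h
  exact this.continuous

lemma Phi_tendsto_atTop : Filter.Tendsto Phi Filter.atTop (nhds 1) := by
  have h := tendsto_measure_Iic_atTop (gaussianReal 0 1)
  rw [measure_univ] at h
  have := (ENNReal.tendsto_toReal ENNReal.one_ne_top).comp h
  exact this

lemma gaussian_singleton (m : ℝ) (c : ℝ) : (gaussianReal m 1) {c} = 0 :=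
  gaussianReal_absolutelyContinuous m one_ne_zero Real.volume_singleton

lemma prob_Ici_toReal (m c : ℝ) :
    ((gaussianReal m 1) (Ici c)).toReal = 1 - ((gaussianReal m 1) (Iic c)).toReal := by
  set μm := gaussianReal m 1
  have hio : μm (Iio c) = μm (Iic c) := by
    rw [← Iic_diff_right, measure_diff_null (gaussian_singleton m c)]
  have hsum : μm (Iio c) + μm (Ici c) = 1 := by
    rw [← measure_union (Iio_disjoint_Ici le_rfl) measurableSet_Ici, Iio_union_Ici,
      measure_univ]
  have := congrArg ENNReal.toReal hsum
  rw [ENNReal.toReal_add (measure_ne_top _ _) (measure_ne_top _ _), hio,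
    ENNReal.toReal_one] at this
  linarith

lemma Phi_tendsto_atBot : Filter.Tendsto Phi Filter.atBot (nhds 0) := by
  have h := tendsto_measure_Ici_atBot (gaussianReal 0 1)
  rw [measure_univ] at h
  have h2 := (ENNReal.tendsto_toReal ENNReal.one_ne_top).comp h
  have h3 : Filter.Tendsto (fun x => 1 - ((gaussianReal 0 1) (Ici x)).toReal)
      Filter.atBot (nhds 0) := by
    have := h2.const_sub 1
    simpa [Function.comp] using this
  refine h3.congr fun x => ?_
  rw [prob_Ici_toReal 0 x]
  simp [Phi]

lemma Phi_PhiInv {p : ℝ} (h0 : 0 < p) (h1 : p < 1) : Phi (PhiInv p) = p := by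
  have hne : {x : ℝ | p ≤ Phi x}.Nonempty := by
    have h : ∀ᶠ x : ℝ in Filter.atTop, p ≤ Phi x := Phi_tendsto_atTop.eventually_const_le h1
    exact h.exists
  obtain ⟨x0, hx0⟩ : ∃ x0 : ℝ, Phi x0 < p := by
    have h : ∀ᶠ x : ℝ in Filter.atBot, Phi x < p := Phi_tendsto_atBot.eventually_lt_const h0
    exact h.exists
  have hbdd : BddBelow {x : ℝ | p ≤ Phi x} := by
    refine ⟨x0, fun x hx => ?_⟩
    by_contra hlt
    push_neg at hlt
    exact absurd (le_trans hx (Phi_mono hlt.le)) (not_le.2 hx0)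
  have hmem : sInf {x : ℝ | p ≤ Phi x} ∈ {x : ℝ | p ≤ Phi x} := IsClosed.csInf_mem
    (isClosed_le continuous_const Phi_continuous) hne hbdd
  have hle : p ≤ Phi (PhiInv p) := hmem
  have hge : Phi (PhiInv p) ≤ p := by
    by_contra hgt
    push_neg at hgt
    have hopen : IsOpen {x : ℝ | p < Phi x} := isOpen_lt continuous_const Phi_continuous
    obtain ⟨ε, hε, hball⟩ := Metric.isOpen_iff.1 hopen _ hgt
    have hmem2 : PhiInv p - ε / 2 ∈ {x : ℝ | p ≤ Phi x} := by
      have hb2 : PhiInv p - ε / 2 ∈ {x : ℝ | p < Phi x} := by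
        refine hball ?_
        rw [Metric.mem_ball, Real.dist_eq, abs_of_nonpos (by linarith)]
        linarith
      exact le_of_lt (show p < Phi (PhiInv p - ε / 2) from hb2)
    have hc : PhiInv p ≤ PhiInv p - ε / 2 := csInf_le hbdd hmem2
    linarith
  linarith

lemma gaussian_Iic_toReal (m x : ℝ) : ((gaussianReal m 1) (Iic x)).toReal = Phi (x - m) := by
  have hmap : (gaussianReal 0 1).map (· + m) = gaussianReal m 1 := by
    rw [gaussianReal_map_add_const m, zero_add]
  rw [← hmap, Measure.map_apply (measurable_add_const m) measurableSet_Iic]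
  have : (· + m) ⁻¹' Iic x = Iic (x - m) := by
    ext t; simp [le_sub_iff_add_le]
  rw [this, Phi]

lemma gaussian_Ici_toReal (m c : ℝ) :
    ((gaussianReal m 1) (Ici c)).toReal = 1 - Phi (c - m) := by
  rw [prob_Ici_toReal, gaussian_Iic_toReal]

lemma integral_gaussian_eq (m : ℝ) (g : ℝ → ℝ) :
    ∫ t, g t ∂(gaussianReal m 1) = ∫ t, gaussianPDFReal m 1 t * g t := by
  rw [gaussianReal_of_var_ne_zero m one_ne_zero]
  have hd : gaussianPDF m 1 = fun x => ((gaussianPDFReal m 1 x).toNNReal : ENNReal) := rfl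
  rw [hd, integral_withDensity_eq_integral_smul
    ((measurable_gaussianPDFReal m 1).real_toNNReal) g]
  congr 1
  ext t
  rw [NNReal.smul_def, smul_eq_mul, Real.coe_toNNReal _ (gaussianPDFReal_nonneg m 1 t)]

lemma pdf_ratio (μ t : ℝ) :
    gaussianPDFReal μ 1 t = rexp (μ * t - μ ^ 2 / 2) * gaussianPDFReal 0 1 t := by
  simp only [gaussianPDFReal, NNReal.coe_one, mul_one, sub_zero]
  rw [mul_left_comm, ← Real.exp_add]
  congr 2
  ring

lemma integrable_of_bounded {ν : Measure ℝ} [IsProbabilityMeasure ν] {φ : ℝ → ℝ}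
    (hm : Measurable φ) (hb : ∀ t, φ t ∈ Icc (0:ℝ) 1) : Integrable φ ν :=
  Integrable.mono (integrable_const (1:ℝ)) hm.aestronglyMeasurable (ae_of_all _ fun t => by
    rw [Real.norm_eq_abs, norm_one, abs_le]
    exact ⟨by linarith [(hb t).1], (hb t).2⟩)

lemma NP_bound (μ : ℝ) (hμ : 0 ≤ μ) {α : ℝ} (hα0 : 0 < α) (hα1 : α < 1)
    (φ : ℝ → ℝ) (hm : Measurable φ) (hb : ∀ t, φ t ∈ Icc (0:ℝ) 1)
    (hI : (∫ t, φ t ∂(gaussianReal 0 1)) ≤ α) :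
    ∫ t, φ t ∂(gaussianReal μ 1) ≤ 1 - Phi (PhiInv (1 - α) - μ) := by
  set c := PhiInv (1 - α) with hcdef
  have hPhic : Phi c = 1 - α := Phi_PhiInv (by linarith) (by linarith)
  set ind : ℝ → ℝ := (Ici c).indicator fun _ => 1 with hinddef
  set p : ℝ → ℝ := gaussianPDFReal 0 1 with hpdef
  set q : ℝ → ℝ := gaussianPDFReal μ 1 with hqdef
  have hind_meas : Measurable ind := measurable_const.indicator measurableSet_Ici
  have hind_bd : ∀ t, 0 ≤ ind t ∧ ind t ≤ 1 := by
    intro t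
    rw [hinddef, Set.indicator_apply]
    split_ifs <;> norm_num
  have hdiff_bd : ∀ t, |φ t - ind t| ≤ 1 := by
    intro t
    rw [abs_le]
    constructor
    · linarith [(hb t).1, (hind_bd t).2]
    · linarith [(hb t).2, (hind_bd t).1]
  have hmsub : Measurable fun t => φ t - ind t := hm.sub hind_meas
  have hint : ∀ (m : ℝ) (g : ℝ → ℝ), Measurable g → (∀ t, |g t| ≤ 1) →
      Integrable (fun t => gaussianPDFReal m 1 t * g t) volume := by
    intro m g hgm hgb
    refine Integrable.mono (integrable_gaussianPDFReal m 1)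
      ((measurable_gaussianPDFReal m 1).mul hgm).aestronglyMeasurable
      (ae_of_all _ fun t => ?_)
    rw [Real.norm_eq_abs, Real.norm_eq_abs, abs_mul]
    exact mul_le_of_le_one_right (abs_nonneg _) (hgb t)
  have h1 : Integrable (fun t => q t * (φ t - ind t)) volume := hint μ _ hmsub hdiff_bd
  have h2 : Integrable (fun t => p t * (φ t - ind t)) volume := hint 0 _ hmsub hdiff_bd
  have hφ_abs : ∀ t, |φ t| ≤ 1 := fun t => by
    rw [abs_le]; exact ⟨by linarith [(hb t).1], (hb t).2⟩
  have hind_abs : ∀ t, |ind t| ≤ 1 := fun t => by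
    rw [abs_le]; exact ⟨by linarith [(hind_bd t).1], (hind_bd t).2⟩
  have hφq_int : Integrable (fun t => q t * φ t) volume := hint μ _ hm hφ_abs
  have hφp_int : Integrable (fun t => p t * φ t) volume := hint 0 _ hm hφ_abs
  have hindq_int : Integrable (fun t => q t * ind t) volume := hint μ _ hind_meas hind_abs
  have hindp_int : Integrable (fun t => p t * ind t) volume := hint 0 _ hind_meas hind_abs
  have key : ∀ t, q t * (φ t - ind t) ≤ rexp (μ * c - μ ^ 2 / 2) * (p t * (φ t - ind t)) := by
    intro t
    have hq : q t = rexp (μ * t - μ ^ 2 / 2) * p t := pdf_ratio μ t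
    have hp0 : 0 ≤ p t := gaussianPDFReal_nonneg 0 1 t
    rw [hq]
    by_cases ht : t ∈ Ici c
    · have hi : ind t = 1 := Set.indicator_of_mem ht _
      have hL : rexp (μ * c - μ ^ 2 / 2) ≤ rexp (μ * t - μ ^ 2 / 2) := by
        apply Real.exp_le_exp.2
        have : c ≤ t := ht
        nlinarith
      rw [hi]
      nlinarith [mul_nonpos_of_nonneg_of_nonpos
        (mul_nonneg (sub_nonneg.2 hL) hp0) (sub_nonpos.2 (hb t).2)]
    · have hi : ind t = 0 := Set.indicator_of_notMem ht _
      have hL : rexp (μ * t - μ ^ 2 / 2) ≤ rexp (μ * c - μ ^ 2 / 2) := by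
        apply Real.exp_le_exp.2
        have : t < c := not_le.1 ht
        nlinarith
      rw [hi]
      nlinarith [mul_nonneg (mul_nonneg (sub_nonneg.2 hL) hp0) (hb t).1]
  have hmono : (∫ t, q t * (φ t - ind t)) ≤
      ∫ t, rexp (μ * c - μ ^ 2 / 2) * (p t * (φ t - ind t)) :=
    integral_mono h1 (h2.const_mul _) key
  rw [integral_const_mul] at hmono
  simp_rw [mul_sub] at hmono
  rw [integral_sub hφq_int hindq_int, integral_sub hφp_int hindp_int] at hmono
  have hindint : ∀ m : ℝ, (∫ t, gaussianPDFReal m 1 t * ind t) = 1 - Phi (c - m) := by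
    intro m
    have heq : (fun t => gaussianPDFReal m 1 t * ind t)
        = (Ici c).indicator (gaussianPDFReal m 1) := by
      ext t
      rw [hinddef, Set.indicator_apply, Set.indicator_apply]
      split_ifs <;> simp
    rw [heq, integral_indicator measurableSet_Ici, ← gaussian_Ici_toReal,
      gaussianReal_apply_eq_integral m one_ne_zero, ENNReal.toReal_ofReal
        (setIntegral_nonneg measurableSet_Ici fun t _ => gaussianPDFReal_nonneg m 1 t)]
  have hindq : (∫ t, q t * ind t) = 1 - Phi (c - μ) := hindint μ
  have hindp : (∫ t, p t * ind t) = α := by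
    rw [hpdef, hindint 0, sub_zero, hPhic]; ring
  have hφp : (∫ t, p t * φ t) = ∫ t, φ t ∂(gaussianReal 0 1) := (integral_gaussian_eq 0 φ).symm
  have hφq : (∫ t, q t * φ t) = ∫ t, φ t ∂(gaussianReal μ 1) := (integral_gaussian_eq μ φ).symm
  rw [hindq, hindp, hφp, hφq] at hmono
  have hneg : rexp (μ * c - μ ^ 2 / 2) * ((∫ t, φ t ∂(gaussianReal 0 1)) - α) ≤ 0 :=
    mul_nonpos_of_nonneg_of_nonpos (Real.exp_pos _).le (sub_nonpos.2 hI)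
  linarith

/-- `G_μ` is the optimal tradeoff for testing `N(0,1)` against `N(μ,1)`:
every test `φ` with type-I error at most `α` has type-II error at least
`G_μ(α)`, and the bound is achieved by a threshold test. -/
theorem gaussian_tradeoff_optimal (μ : ℝ) (hμ : 0 ≤ μ) :
    (∀ α ∈ Set.Icc (0:ℝ) 1, ∀ φ : ℝ → ℝ, Measurable φ →
      (∀ t, φ t ∈ Set.Icc (0:ℝ) 1) →
      (∫ t, φ t ∂(gaussianReal 0 1)) ≤ α →
      Gmu μ α ≤ 1 - ∫ t, φ t ∂(gaussianReal μ 1)) ∧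
    (∀ α ∈ Set.Ioo (0:ℝ) 1, ∃ c : ℝ,
      (∫ t, Set.indicator (Set.Ici c) (fun _ => (1:ℝ)) t ∂(gaussianReal 0 1)) = α ∧
      1 - (∫ t, Set.indicator (Set.Ici c) (fun _ => (1:ℝ)) t ∂(gaussianReal μ 1))
        = Gmu μ α) := by
  constructor
  · intro α hα φ hm hb hI
    by_cases h0 : α ≤ 0
    · have hα0 : α = 0 := le_antisymm h0 hα.1
      subst hα0
      rw [Gmu, if_pos le_rfl]
      have hintP : Integrable φ (gaussianReal 0 1) := integrable_of_bounded hm hb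
      have hz : (∫ t, φ t ∂(gaussianReal 0 1)) = 0 :=
        le_antisymm hI (integral_nonneg fun t => (hb t).1)
      have hae : φ =ᵐ[gaussianReal 0 1] 0 :=
        (integral_eq_zero_iff_of_nonneg (fun t => (hb t).1) hintP).1 hz
      have haev : φ =ᵐ[(volume : Measure ℝ)] 0 :=
        (gaussianReal_absolutelyContinuous' 0 one_ne_zero).ae_eq hae
      have haeq : φ =ᵐ[gaussianReal μ 1] 0 :=
        (gaussianReal_absolutelyContinuous μ one_ne_zero).ae_eq haev
      rw [integral_congr_ae haeq]
      simp
    · by_cases h1 : 1 ≤ α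
      · rw [Gmu, if_neg h0, if_pos h1]
        have hle : (∫ t, φ t ∂(gaussianReal μ 1)) ≤ 1 := by
          have := integral_mono (integrable_of_bounded hm hb (ν := gaussianReal μ 1))
            (integrable_const (1:ℝ)) (fun t => (hb t).2)
          rwa [integral_const, measureReal_def, measure_univ, ENNReal.toReal_one, one_smul] at this
        linarith
      · push_neg at h0 h1
        rw [Gmu, if_neg (not_le.2 h0), if_neg (not_le.2 h1)]
        linarith [NP_bound μ hμ h0 h1 φ hm hb hI]
  · intro α hα
    obtain ⟨hα0, hα1⟩ := hα
    refine ⟨PhiInv (1 - α), ?_, ?_⟩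
    · rw [integral_indicator_const (1:ℝ) measurableSet_Ici, smul_eq_mul, mul_one, measureReal_def,
        gaussian_Ici_toReal, sub_zero, Phi_PhiInv (by linarith) (by linarith)]
      ring
    · rw [integral_indicator_const (1:ℝ) measurableSet_Ici, smul_eq_mul, mul_one, measureReal_def,
        gaussian_Ici_toReal, Gmu, if_neg (not_le.2 hα0), if_neg (not_le.2 hα1)]
      ring
end

section
/- The maximum of the function h(α) = 1 − α − G_μ(α) over α ∈ [0,1], where G_μ(α) = Φ(Φ^{-1}(1−α) − μ) and μ > 0, is attained at α = Φ(−μ/2) and equals 2Φ(μ/2) − 1 = Φ(μ/2) − Φ(−μ/2). -/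
open MeasureTheory ProbabilityTheory Real Set

section Aux

namespace MaxAdv

noncomputable def g : ℝ → ℝ := ProbabilityTheory.gaussianPDFReal 0 1

lemma g_pos (x : ℝ) : 0 < g x := ProbabilityTheory.gaussianPDFReal_pos 0 1 x one_ne_zero

lemma g_int : Integrable g := ProbabilityTheory.integrable_gaussianPDFReal 0 1

lemma g_neg (x : ℝ) : g (-x) = g x := by
  simp [g, ProbabilityTheory.gaussianPDFReal, neg_sq]

lemma g_le_g {x y : ℝ} (h : y ^ 2 ≤ x ^ 2) : g x ≤ g y := by
  simp only [g, ProbabilityTheory.gaussianPDFReal, sub_zero, NNReal.coe_one, mul_one]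
  exact mul_le_mul_of_nonneg_left (Real.exp_le_exp.2 (by linarith)) (by positivity)

lemma Phi_eq (x : ℝ) : Phi x = ∫ t in Iic x, g t := by
  rw [Phi, ProbabilityTheory.gaussianReal_apply_eq_integral 0 one_ne_zero]
  exact ENNReal.toReal_ofReal (setIntegral_nonneg measurableSet_Iic fun t _ => (g_pos t).le)

lemma g_total : ∫ t, g t = 1 := ProbabilityTheory.integral_gaussianPDFReal_eq_one 0 one_ne_zero

lemma Phi_sub {a b : ℝ} (h : a ≤ b) : Phi b - Phi a = ∫ t in Ioc a b, g t := by
  rw [Phi_eq, Phi_eq, ← Set.Iic_union_Ioc_eq_Iic h,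
    setIntegral_union (Set.Iic_disjoint_Ioc le_rfl) measurableSet_Ioc
      g_int.integrableOn g_int.integrableOn]
  ring

lemma Phi_strictMono : StrictMono Phi := fun a b hab => by
  have h := intervalIntegral.intervalIntegral_pos_of_pos (g_int.intervalIntegrable (a := a) (b := b)) g_pos hab
  rw [intervalIntegral.integral_of_le hab.le, ← Phi_sub hab.le] at h
  linarith

lemma Phi_neg (x : ℝ) : Phi (-x) = 1 - Phi x := by
  have hc : (∫ t in Iic x, g t) + ∫ t in (Iic x)ᶜ, g t = ∫ t, g t :=
    integral_add_compl measurableSet_Iic g_int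
  rw [compl_Iic, g_total] at hc
  have h2 : (∫ t in Ioi x, g (-t)) = ∫ t in Iic (-x), g t :=
    integral_comp_neg_Ioi x g
  simp only [g_neg] at h2
  rw [Phi_eq, Phi_eq] at *
  linarith [h2, hc]

lemma PhiInv_Phi (y : ℝ) : PhiInv (Phi y) = y := by
  have hset : {x : ℝ | Phi y ≤ Phi x} = Ici y := by
    ext x; simp [Phi_strictMono.le_iff_le]
  rw [PhiInv, hset, csInf_Ici]

lemma Phi_eq_cdf (x : ℝ) : Phi x = ProbabilityTheory.cdf (gaussianReal 0 1) x :=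
  (ProbabilityTheory.cdf_eq_real _ x).symm

lemma Phi_le_one (x : ℝ) : Phi x ≤ 1 := by
  rw [Phi_eq_cdf]; exact ProbabilityTheory.cdf_le_one _ x

lemma Phi_nonneg (x : ℝ) : 0 ≤ Phi x := by
  rw [Phi_eq_cdf]; exact ProbabilityTheory.cdf_nonneg _ x

lemma Phi_pos (x : ℝ) : 0 < Phi x :=
  lt_of_le_of_lt (Phi_nonneg (x - 1)) (Phi_strictMono (by linarith))

lemma Phi_lt_one (x : ℝ) : Phi x < 1 :=
  lt_of_lt_of_le (Phi_strictMono (show x < x + 1 by linarith)) (Phi_le_one (x + 1))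

lemma Phi_eq_primitive (x : ℝ) : Phi x = Phi 0 + ∫ t in (0:ℝ)..x, g t := by
  rcases le_total 0 x with h | h
  · rw [intervalIntegral.integral_of_le h, ← Phi_sub h]; ring
  · rw [intervalIntegral.integral_symm, intervalIntegral.integral_of_le h, ← Phi_sub h]; ring

lemma Phi_continuous : Continuous Phi := by
  have h : Phi = fun x => Phi 0 + ∫ t in (0:ℝ)..x, g t := funext Phi_eq_primitive
  rw [h]
  exact continuous_const.add (g_int.continuous_primitive 0)

lemma Phi_tendsto_atTop : Filter.Tendsto Phi Filter.atTop (nhds 1) := by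
  have := ProbabilityTheory.tendsto_cdf_atTop (gaussianReal 0 1)
  exact this.congr fun x => (Phi_eq_cdf x).symm

lemma Phi_tendsto_atBot : Filter.Tendsto Phi Filter.atBot (nhds 0) := by
  have := ProbabilityTheory.tendsto_cdf_atBot (gaussianReal 0 1)
  exact this.congr fun x => (Phi_eq_cdf x).symm

lemma Phi_PhiInv_ge {p : ℝ} (hp0 : 0 < p) (hp1 : p < 1) : p ≤ Phi (PhiInv p) := by
  set S := {x : ℝ | p ≤ Phi x} with hS
  have hne : S.Nonempty := by
    obtain ⟨x, hx⟩ := (Phi_tendsto_atTop.eventually (eventually_gt_nhds hp1)).exists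
    exact ⟨x, hx.le⟩
  have hbdd : BddBelow S := by
    obtain ⟨x0, hx0⟩ := (Phi_tendsto_atBot.eventually (eventually_lt_nhds hp0)).exists
    refine ⟨x0, fun y hy => ?_⟩
    by_contra hlt
    push_neg at hlt
    exact absurd (hy.trans (Phi_strictMono hlt).le) (not_le.2 hx0)
  have hclosed : IsClosed S := isClosed_le continuous_const Phi_continuous
  exact hclosed.csInf_mem hne hbdd

lemma key_half (μ t : ℝ) (hμ : 0 < μ) (ht : μ / 2 ≤ t) :
    Phi t - Phi (t - μ) ≤ Phi (μ / 2) - Phi (-(μ / 2)) := by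
  have hshift : Integrable (fun x => g (x - μ)) := g_int.comp_sub_right μ
  have h1 : Phi t - Phi (μ / 2) = ∫ x in (μ/2)..t, g x := by
    rw [intervalIntegral.integral_of_le ht, ← Phi_sub ht]
  have h2 : (∫ x in (μ/2)..t, g (x - μ)) = ∫ x in (μ/2 - μ)..(t - μ), g x :=
    intervalIntegral.integral_comp_sub_right g μ
  have h3 : (∫ x in (μ/2 - μ)..(t - μ), g x) = Phi (t - μ) - Phi (-(μ / 2)) := by
    have hle : μ/2 - μ ≤ t - μ := by linarith
    rw [intervalIntegral.integral_of_le hle, ← Phi_sub hle]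
    ring_nf
  have hmono : (∫ x in (μ/2)..t, g x) ≤ ∫ x in (μ/2)..t, g (x - μ) := by
    apply intervalIntegral.integral_mono_on ht g_int.intervalIntegrable
      hshift.intervalIntegrable
    intro x hx
    apply g_le_g
    nlinarith [hx.1]
  linarith [h1, h2, h3, hmono]

lemma key (μ t : ℝ) (hμ : 0 < μ) :
    Phi t - Phi (t - μ) ≤ Phi (μ / 2) - Phi (-(μ / 2)) := by
  rcases le_total (μ / 2) t with ht | ht
  · exact key_half μ t hμ ht
  · have h := key_half μ (μ - t) hμ (by linarith)
    rw [show μ - t - μ = -t by ring] at h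
    have e1 : Phi (μ - t) = 1 - Phi (t - μ) := by
      rw [show μ - t = -(t - μ) by ring, Phi_neg]
    have e2 : Phi (-t) = 1 - Phi t := Phi_neg t
    linarith

end MaxAdv

end Aux

/-- The maximum of `1 - α - G_μ(α)` over `α ∈ [0,1]` is attained at
`α = Φ(-μ/2)` and equals `2Φ(μ/2) - 1 = Φ(μ/2) - Φ(-μ/2)`. -/
theorem max_advantage (μ : ℝ) (hμ : 0 < μ) :
    (∀ α ∈ Set.Icc (0:ℝ) 1, 1 - α - Gmu μ α ≤ 2 * Phi (μ / 2) - 1) ∧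
    Phi (-μ / 2) ∈ Set.Icc (0:ℝ) 1 ∧
    1 - Phi (-μ / 2) - Gmu μ (Phi (-μ / 2)) = 2 * Phi (μ / 2) - 1 ∧
    2 * Phi (μ / 2) - 1 = Phi (μ / 2) - Phi (-μ / 2) := by
  
  classical
  open MaxAdv in
  have hkey := MaxAdv.key μ
  have hneg : Phi (-μ / 2) = Phi (-(μ / 2)) := by rw [neg_div]
  have hsym : Phi (-(μ / 2)) = 1 - Phi (μ / 2) := MaxAdv.Phi_neg (μ / 2)
  have hrhs : 2 * Phi (μ / 2) - 1 = Phi (μ / 2) - Phi (-(μ / 2)) := by linarith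
  have hp0 : 0 < Phi (-(μ / 2)) := MaxAdv.Phi_pos _
  have hp1 : Phi (-(μ / 2)) < 1 := MaxAdv.Phi_lt_one _
  refine ⟨?_, ?_, ?_, by rw [hneg]; linarith⟩
  · intro α hα
    obtain ⟨hα0, hα1⟩ := hα
    by_cases h0 : α ≤ 0
    · have : α = 0 := le_antisymm h0 hα0
      subst this
      simp only [Gmu, le_refl, if_pos]
      have := MaxAdv.Phi_strictMono (show -(μ/2) < μ/2 by linarith)
      linarith
    · by_cases h1 : 1 ≤ α
      · have : α = 1 := le_antisymm hα1 h1
        subst this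
        simp only [Gmu, le_refl, if_pos]
        have := MaxAdv.Phi_strictMono (show -(μ/2) < μ/2 by linarith)
        norm_num
        linarith
      · push_neg at h0 h1
        rw [Gmu, if_neg (not_le.2 h0), if_neg (not_le.2 h1)]
        set t := PhiInv (1 - α) with ht
        have hPt : 1 - α ≤ Phi t := MaxAdv.Phi_PhiInv_ge (by linarith) (by linarith)
        have := MaxAdv.key μ t hμ
        linarith
  · exact ⟨MaxAdv.Phi_nonneg _, MaxAdv.Phi_le_one _⟩
  · have hval : Gmu μ (Phi (-μ / 2)) = Phi (-(μ / 2)) := by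
      rw [hneg, Gmu, if_neg (not_le.2 hp0), if_neg (not_le.2 hp1)]
      have h1 : 1 - Phi (-(μ / 2)) = Phi (μ / 2) := by linarith
      rw [h1, MaxAdv.PhiInv_Phi, show μ / 2 - μ = -(μ / 2) by ring]
    rw [hval, hneg]
    linarith
end

section
/- If a mechanism M satisfies (ε, δ)-DP, then for all neighboring x, x' and any test φ with type-I error α = E_{M(x)}[φ], the type-II error β = 1 − E_{M(x')}[φ] satisfies β ≥ max(0, 1 − δ − e^ε·α, e^{−ε}(1 − δ − α)). -/
open MeasureTheory ProbabilityTheory Real Set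

lemma dp_integral_le {Ω : Type*} [MeasurableSpace Ω] (P Q : Measure Ω)
    [IsProbabilityMeasure P] [IsProbabilityMeasure Q] (ε δ : ℝ)
    (h : ∀ S : Set Ω, MeasurableSet S → (P S).toReal ≤ Real.exp ε * (Q S).toReal + δ)
    (ψ : Ω → ℝ) (hm : Measurable ψ) (hb : ∀ ω, ψ ω ∈ Set.Icc (0:ℝ) 1) :
    ∫ ω, ψ ω ∂P ≤ Real.exp ε * ∫ ω, ψ ω ∂Q + δ := by
  have hnnP : 0 ≤ᵐ[P] ψ := Filter.Eventually.of_forall fun ω => (hb ω).1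
  have hnnQ : 0 ≤ᵐ[Q] ψ := Filter.Eventually.of_forall fun ω => (hb ω).1
  have hbdP : ψ ≤ᵐ[P] fun _ => (1:ℝ) := Filter.Eventually.of_forall fun ω => (hb ω).2
  have hbdQ : ψ ≤ᵐ[Q] fun _ => (1:ℝ) := Filter.Eventually.of_forall fun ω => (hb ω).2
  have hintP : Integrable ψ P := by
    refine (integrable_const (1:ℝ)).mono' hm.aestronglyMeasurable ?_
    exact Filter.Eventually.of_forall fun ω => by
      rw [Real.norm_eq_abs, abs_of_nonneg (hb ω).1]; exact (hb ω).2
  have hintQ : Integrable ψ Q := by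
    refine (integrable_const (1:ℝ)).mono' hm.aestronglyMeasurable ?_
    exact Filter.Eventually.of_forall fun ω => by
      rw [Real.norm_eq_abs, abs_of_nonneg (hb ω).1]; exact (hb ω).2
  rw [hintP.integral_eq_integral_Ioc_meas_le hnnP hbdP,
      hintQ.integral_eq_integral_Ioc_meas_le hnnQ hbdQ]
  set p : ℝ → ℝ := fun t => (P {a | t ≤ ψ a}).toReal with hp
  set q : ℝ → ℝ := fun t => (Q {a | t ≤ ψ a}).toReal with hq
  have hmp : Measurable p := Measurable.ennreal_toReal <|
    Antitone.measurable (fun s t hst => measure_mono (fun a ha => hst.trans ha))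
  have hmq : Measurable q := Measurable.ennreal_toReal <|
    Antitone.measurable (fun s t hst => measure_mono (fun a ha => hst.trans ha))
  have hip : IntegrableOn p (Ioc (0:ℝ) 1) := by
    refine Measure.integrableOn_of_bounded (M := 1) measure_Ioc_lt_top.ne
      hmp.aestronglyMeasurable ?_
    refine Filter.Eventually.of_forall fun t => ?_
    rw [Real.norm_eq_abs, abs_of_nonneg ENNReal.toReal_nonneg]
    exact ENNReal.toReal_le_of_le_ofReal one_pos.le (by simpa using prob_le_one)
  have hiq : IntegrableOn q (Ioc (0:ℝ) 1) := by
    refine Measure.integrableOn_of_bounded (M := 1) measure_Ioc_lt_top.ne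
      hmq.aestronglyMeasurable ?_
    refine Filter.Eventually.of_forall fun t => ?_
    rw [Real.norm_eq_abs, abs_of_nonneg ENNReal.toReal_nonneg]
    exact ENNReal.toReal_le_of_le_ofReal one_pos.le (by simpa using prob_le_one)
  have hmono : ∫ t in Ioc (0:ℝ) 1, p t ≤ ∫ t in Ioc (0:ℝ) 1, (Real.exp ε * q t + δ) := by
    refine setIntegral_mono_on hip ((hiq.const_mul _).add (integrableOn_const
      measure_Ioc_lt_top.ne)) measurableSet_Ioc fun t _ => ?_
    exact h _ (hm measurableSet_Ici)
  refine hmono.trans (le_of_eq ?_)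
  rw [integral_add (hiq.const_mul _) (integrableOn_const measure_Ioc_lt_top.ne),
    integral_const_mul, setIntegral_const]
  simp [Real.volume_Ioc, hq, measureReal_def]

/-- `(ε,δ)`-DP implies the piecewise-linear tradeoff lower bound: any test with
type-I error `α` has type-II error at least
`max(0, 1 - δ - e^ε α, e^{-ε}(1 - δ - α))`. -/
theorem dp_tradeoff_lower_bound {X Ω : Type*} [MeasurableSpace Ω]
    (M : X → Measure Ω) (Neighbor : X → X → Prop)
    (hsym : ∀ x x', Neighbor x x' → Neighbor x' x)
    (hM : ∀ x, IsProbabilityMeasure (M x))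
    (ε δ : ℝ) (hε : 0 ≤ ε) (hDP : IsDP M Neighbor ε δ) :
    ∀ x x', Neighbor x x' →
      ∀ φ : Ω → ℝ, Measurable φ → (∀ ω, φ ω ∈ Set.Icc (0:ℝ) 1) →
        max 0 (max (1 - δ - Real.exp ε * ∫ ω, φ ω ∂(M x))
          (Real.exp (-ε) * (1 - δ - ∫ ω, φ ω ∂(M x))))
          ≤ 1 - ∫ ω, φ ω ∂(M x') := by
  intro x x' hN φ hmφ hbφ
  haveI := hM x; haveI := hM x'
  have hint : ∀ y, Integrable φ (M y) := by
    intro y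
    haveI := hM y
    refine (integrable_const (1:ℝ)).mono' hmφ.aestronglyMeasurable ?_
    exact Filter.Eventually.of_forall fun ω => by
      rw [Real.norm_eq_abs, abs_of_nonneg (hbφ ω).1]; exact (hbφ ω).2
  have hQ1 : ∫ ω, φ ω ∂(M x') ≤ 1 := by
    calc ∫ ω, φ ω ∂(M x') ≤ ∫ _ω, (1:ℝ) ∂(M x') :=
          integral_mono (hint x') (integrable_const 1) fun ω => (hbφ ω).2
      _ = 1 := by simp
  refine max_le (by linarith) (max_le ?_ ?_)
  · have h1 : ∫ ω, φ ω ∂(M x') ≤ Real.exp ε * ∫ ω, φ ω ∂(M x) + δ :=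
      dp_integral_le (M x') (M x) ε δ (hDP x' x (hsym x x' hN)) φ hmφ hbφ
    linarith
  · have h2 : ∫ ω, (1 - φ ω) ∂(M x) ≤ Real.exp ε * ∫ ω, (1 - φ ω) ∂(M x') + δ :=
      dp_integral_le (M x) (M x') ε δ (hDP x x' hN) (fun ω => 1 - φ ω)
        (measurable_const.sub hmφ)
        (fun ω => ⟨show (0:ℝ) ≤ 1 - φ ω by linarith [(hbφ ω).2], show 1 - φ ω ≤ (1:ℝ) by linarith [(hbφ ω).1]⟩)
    rw [integral_sub (integrable_const 1) (hint x), integral_sub (integrable_const 1) (hint x')]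
      at h2
    simp only [integral_const, measure_univ, ENNReal.toReal_one, probReal_univ, smul_eq_mul, one_mul] at h2
    have e1 : Real.exp (-ε) * Real.exp ε = 1 := by rw [← Real.exp_add]; simp
    nlinarith [Real.exp_nonneg (-ε), mul_le_mul_of_nonneg_left
      (show 1 - δ - ∫ ω, φ ω ∂(M x) ≤ Real.exp ε * (1 - ∫ ω, φ ω ∂(M x')) by linarith)
      (Real.exp_nonneg (-ε))]
end

section
/- A mechanism M satisfies (ε, δ)-DP for ε ≥ 0, δ ∈ [0,1] if and only if for all neighboring x, x' the tradeoff function satisfies T(M(x), M(x'))(α) ≥ f_{ε,δ}(α) := max(0, 1 − δ − e^ε·α, e^{−ε}(1 − δ − α)) for all α ∈ [0,1]. -/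
open MeasureTheory ProbabilityTheory Real Set

lemma aux_integrable_of_Icc {Ω : Type*} [MeasurableSpace Ω] (μ : Measure Ω)
    [IsFiniteMeasure μ] {φ : Ω → ℝ} (hφm : Measurable φ)
    (hφ : ∀ ω, φ ω ∈ Set.Icc (0:ℝ) 1) : Integrable φ μ :=
  (integrable_const 1).mono' hφm.aestronglyMeasurable
    (ae_of_all _ fun ω => by
      rw [Real.norm_eq_abs, abs_of_nonneg (hφ ω).1]; exact (hφ ω).2)

lemma aux_toReal_prob_le_one {Ω : Type*} [MeasurableSpace Ω] (μ : Measure Ω)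
    [IsProbabilityMeasure μ] (S : Set Ω) : (μ S).toReal ≤ 1 := by
  simpa using ENNReal.toReal_mono ENNReal.one_ne_top prob_le_one

lemma aux_layercake {Ω : Type*} [MeasurableSpace Ω] (μ : Measure Ω)
    [IsProbabilityMeasure μ] {φ : Ω → ℝ} (hφm : Measurable φ)
    (hφ : ∀ ω, φ ω ∈ Set.Icc (0:ℝ) 1) :
    ∫ ω, φ ω ∂μ = ∫ t in Set.Ioc (0:ℝ) 1, (μ {a | t ≤ φ a}).toReal :=
  (aux_integrable_of_Icc μ hφm hφ).integral_eq_integral_Ioc_meas_le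
    (ae_of_all _ fun ω => (hφ ω).1) (ae_of_all _ fun ω => (hφ ω).2)

lemma aux_key {Ω : Type*} [MeasurableSpace Ω] (P Q : Measure Ω)
    [IsProbabilityMeasure P] [IsProbabilityMeasure Q] {ε δ : ℝ} (hδ : 0 ≤ δ)
    (hDP : ∀ S : Set Ω, MeasurableSet S → (P S).toReal ≤ Real.exp ε * (Q S).toReal + δ)
    {φ : Ω → ℝ} (hφm : Measurable φ) (hφ : ∀ ω, φ ω ∈ Set.Icc (0:ℝ) 1) :
    ∫ ω, φ ω ∂P ≤ Real.exp ε * ∫ ω, φ ω ∂Q + δ := by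
  rw [aux_layercake P hφm hφ, aux_layercake Q hφm hφ]
  have antiP : Antitone (fun t : ℝ => P {a | t ≤ φ a}) := fun s t hst =>
    measure_mono fun a ha => le_trans hst ha
  have antiQ : Antitone (fun t : ℝ => Q {a | t ≤ φ a}) := fun s t hst =>
    measure_mono fun a ha => le_trans hst ha
  have measP : Measurable fun t : ℝ => (P {a | t ≤ φ a}).toReal :=
    antiP.measurable.ennreal_toReal
  have measQ : Measurable fun t : ℝ => (Q {a | t ≤ φ a}).toReal :=
    antiQ.measurable.ennreal_toReal
  have hfin : (volume (Set.Ioc (0:ℝ) 1)) < ⊤ := by simp [Real.volume_Ioc]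
  have intP : IntegrableOn (fun t : ℝ => (P {a | t ≤ φ a}).toReal) (Set.Ioc 0 1) volume :=
    (integrableOn_const (C := (1:ℝ)) hfin.ne).mono' measP.aestronglyMeasurable
      (ae_of_all _ fun t => by
        rw [Real.norm_eq_abs, abs_of_nonneg ENNReal.toReal_nonneg]
        exact aux_toReal_prob_le_one P _)
  have intQ : IntegrableOn (fun t : ℝ => (Q {a | t ≤ φ a}).toReal) (Set.Ioc 0 1) volume :=
    (integrableOn_const (C := (1:ℝ)) hfin.ne).mono' measQ.aestronglyMeasurable
      (ae_of_all _ fun t => by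
        rw [Real.norm_eq_abs, abs_of_nonneg ENNReal.toReal_nonneg]
        exact aux_toReal_prob_le_one Q _)
  have intRHS : IntegrableOn
      (fun t : ℝ => Real.exp ε * (Q {a | t ≤ φ a}).toReal + δ) (Set.Ioc 0 1) volume :=
    (intQ.const_mul _).add (integrableOn_const hfin.ne)
  calc ∫ t in Set.Ioc (0:ℝ) 1, (P {a | t ≤ φ a}).toReal
      ≤ ∫ t in Set.Ioc (0:ℝ) 1, (Real.exp ε * (Q {a | t ≤ φ a}).toReal + δ) :=
        setIntegral_mono_on intP intRHS measurableSet_Ioc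
          (fun t _ => hDP _ (hφm measurableSet_Ici))
    _ = (Real.exp ε * ∫ t in Set.Ioc (0:ℝ) 1, (Q {a | t ≤ φ a}).toReal) + δ := by
        rw [integral_add (intQ.const_mul _) (integrableOn_const hfin.ne),
          integral_const_mul, setIntegral_const]
        simp [Real.volume_Ioc]

lemma aux_one_sub_integral {Ω : Type*} [MeasurableSpace Ω] (μ : Measure Ω)
    [IsProbabilityMeasure μ] {φ : Ω → ℝ} (hφm : Measurable φ)
    (hφ : ∀ ω, φ ω ∈ Set.Icc (0:ℝ) 1) :
    ∫ ω, (1 - φ ω) ∂μ = 1 - ∫ ω, φ ω ∂μ := by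
  rw [integral_sub (integrable_const 1) (aux_integrable_of_Icc μ hφm hφ)]
  simp

lemma aux_integral_le_one {Ω : Type*} [MeasurableSpace Ω] (μ : Measure Ω)
    [IsProbabilityMeasure μ] {φ : Ω → ℝ} (hφm : Measurable φ)
    (hφ : ∀ ω, φ ω ∈ Set.Icc (0:ℝ) 1) : ∫ ω, φ ω ∂μ ≤ 1 := by
  calc ∫ ω, φ ω ∂μ ≤ ∫ _, (1:ℝ) ∂μ :=
        integral_mono (aux_integrable_of_Icc μ hφm hφ) (integrable_const 1)
          (fun ω => (hφ ω).2)
    _ = 1 := by simp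

lemma aux_compl_toReal {Ω : Type*} [MeasurableSpace Ω] (μ : Measure Ω)
    [IsProbabilityMeasure μ] {S : Set Ω} (hS : MeasurableSet S) :
    (μ Sᶜ).toReal = 1 - (μ S).toReal := by
  rw [prob_compl_eq_one_sub hS, ENNReal.toReal_sub_of_le prob_le_one ENNReal.one_ne_top]
  simp

/-- Tradeoff-function characterization of `(ε,δ)`-DP: the symmetric DP
inequalities hold iff the tradeoff function is bounded below by
`f_{ε,δ}(α) = max(0, 1 - δ - e^ε α, e^{-ε}(1 - δ - α))` on `[0,1]`. -/
theorem dp_iff_tradeoff {X Ω : Type*} [MeasurableSpace Ω]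
    (M : X → Measure Ω) (Neighbor : X → X → Prop)
    (hM : ∀ x, IsProbabilityMeasure (M x))
    (ε δ : ℝ) (hε : 0 ≤ ε) (hδ : δ ∈ Set.Icc (0:ℝ) 1) :
    (∀ x x', Neighbor x x' → ∀ S : Set Ω, MeasurableSet S →
      ((M x) S).toReal ≤ Real.exp ε * ((M x') S).toReal + δ ∧
      ((M x') S).toReal ≤ Real.exp ε * ((M x) S).toReal + δ) ↔
    (∀ x x', Neighbor x x' → ∀ α ∈ Set.Icc (0:ℝ) 1,
      max 0 (max (1 - δ - Real.exp ε * α) (Real.exp (-ε) * (1 - δ - α)))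
        ≤ tradeoff (M x) (M x') α) := by
  have hexp : Real.exp (-ε) * Real.exp ε = 1 := by
    rw [← Real.exp_add]; simp
  constructor
  · intro h x x' hN α hα
    haveI := hM x; haveI := hM x'
    have hDP1 : ∀ S : Set Ω, MeasurableSet S →
        ((M x) S).toReal ≤ Real.exp ε * ((M x') S).toReal + δ :=
      fun S hS => (h x x' hN S hS).1
    have hDP2 : ∀ S : Set Ω, MeasurableSet S →
        ((M x') S).toReal ≤ Real.exp ε * ((M x) S).toReal + δ :=
      fun S hS => (h x x' hN S hS).2
    unfold tradeoff
    apply le_csInf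
    · exact ⟨1, fun _ => 0, measurable_const,
        fun ω => ⟨le_refl 0, zero_le_one⟩, by simpa using hα.1, by simp⟩
    · rintro b ⟨φ, hφm, hφ, hφP, rfl⟩
      have hQ1 : ∫ ω, φ ω ∂(M x') ≤ 1 := aux_integral_le_one _ hφm hφ
      apply max_le (by linarith)
      apply max_le
      · have h2 := aux_key (M x') (M x) hδ.1 hDP2 hφm hφ
        nlinarith [Real.exp_pos ε]
      · have hψ : ∀ ω, (1 - φ ω) ∈ Set.Icc (0:ℝ) 1 :=
          fun ω => ⟨by linarith [(hφ ω).2], by linarith [(hφ ω).1]⟩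
        have h3 := aux_key (M x) (M x') hδ.1 hDP1 (measurable_const.sub hφm) hψ
        change ∫ ω, (1 - φ ω) ∂(M x) ≤ Real.exp ε * ∫ ω, (1 - φ ω) ∂(M x') + δ at h3
        rw [aux_one_sub_integral _ hφm hφ, aux_one_sub_integral _ hφm hφ] at h3
        have h4 : 1 - δ - α ≤ Real.exp ε * (1 - ∫ ω, φ ω ∂(M x')) := by linarith
        have h5 := mul_le_mul_of_nonneg_left h4 (Real.exp_pos (-ε)).le
        rw [← mul_assoc, hexp, one_mul] at h5
        exact h5
  · intro h x x' hN S hS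
    haveI := hM x; haveI := hM x'
    have hle : ∀ T : Set Ω, MeasurableSet T →
        tradeoff (M x) (M x') (((M x) T).toReal) ≤ 1 - ((M x') T).toReal := by
      intro T hT
      unfold tradeoff
      apply csInf_le
      · refine ⟨0, ?_⟩
        rintro b ⟨φ, hφm, hφ, _, rfl⟩
        have := aux_integral_le_one (M x') hφm hφ
        linarith
      · refine ⟨T.indicator (fun _ => 1), measurable_const.indicator hT, ?_, ?_, ?_⟩
        · intro ω; by_cases hω : ω ∈ T <;> simp [Set.indicator_apply, hω]
        · rw [integral_indicator_const _ hT]; simp; exact le_rfl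
        · rw [integral_indicator_const _ hT]; simp; rfl
    have key : ∀ T : Set Ω, MeasurableSet T →
        max 0 (max (1 - δ - Real.exp ε * ((M x) T).toReal)
          (Real.exp (-ε) * (1 - δ - ((M x) T).toReal))) ≤ 1 - ((M x') T).toReal :=
      fun T hT => le_trans
        (h x x' hN _ ⟨ENNReal.toReal_nonneg, aux_toReal_prob_le_one _ _⟩) (hle T hT)
    constructor
    · have k := le_trans (le_max_right _ _)
        (le_trans (le_max_right _ _) (key Sᶜ hS.compl))
      rw [aux_compl_toReal (M x) hS, aux_compl_toReal (M x') hS] at k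
      set p := ((M x) S).toReal
      set q := ((M x') S).toReal
      have e1 : Real.exp (-ε) * (1 - δ - (1 - p)) = Real.exp (-ε) * (p - δ) := by ring
      have k1 : Real.exp (-ε) * (p - δ) ≤ q := by rw [← e1]; linarith
      have k2 := mul_le_mul_of_nonneg_left k1 (Real.exp_pos ε).le
      have e2 : Real.exp ε * (Real.exp (-ε) * (p - δ)) = p - δ := by
        rw [← mul_assoc, mul_comm (Real.exp ε), hexp, one_mul]
      rw [e2] at k2
      linarith
    · have k := le_trans (le_max_left _ _)
        (le_trans (le_max_right _ _) (key S hS))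
      linarith
end
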